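/- arXiv:2012.13070 — 4 statements merged into one kernel-verified Lean document; each statement's English description precedes it below -/
import Mathlib

section
/- Let Γ be a graph and ε an end of Γ. For any finite families R = (R_i : i ∈ I) and S = (S_j : j ∈ J) of disjoint ε-rays in Γ, there is a finite vertex set X such that every linkage from R to S after X is transitional. -/
set_option autoImplicit false

namespace Ubiquity

variable {V W T : Type}

/-- A ray (one-way infinite path) in a graph `G`. -/
structure Ray (G : SimpleGraph V) where
  f : ℕ → V
  inj : Function.Injective f
  adj : ∀ n : ℕ, G.Adj (f n) (f (n + 1))

/-- The vertex set of a ray. -/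
def Ray.verts {G : SimpleGraph V} (R : Ray G) : Set V := Set.range R.f

/-- The tail of a ray from its `k`-th vertex on. -/
def Ray.tail {G : SimpleGraph V} (R : Ray G) (k : ℕ) : Ray G where
  f := fun n => R.f (n + k)
  inj := fun a b h => by have := R.inj h; omega
  adj := fun n => by
    show G.Adj (R.f (n + k)) (R.f (n + 1 + k))
    have h : n + 1 + k = n + k + 1 := by omega
    rw [h]
    exact R.adj (n + k)

/-- `R'` is a tail of the ray `R`. -/
def Ray.IsTailOf {G : SimpleGraph V} (R' R : Ray G) : Prop :=
  ∃ k : ℕ, ∀ n : ℕ, R'.f n = R.f (n + k)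

/-- A path in `G` from a vertex of `A` to a vertex of `B`. -/
structure PathBetween (G : SimpleGraph V) (A B : Set V) where
  first : V
  last : V
  walk : G.Walk first last
  isPath : walk.IsPath
  first_mem : first ∈ A
  last_mem : last ∈ B

/-- The vertex set of such a path. -/
def PathBetween.verts {G : SimpleGraph V} {A B : Set V} (P : PathBetween G A B) : Set V :=
  {v | v ∈ P.walk.support}

/-- Two rays are equivalent in `G − X`: there are infinitely many pairwise
vertex-disjoint paths between them, all avoiding `X`. -/
def RayEquivAvoiding (G : SimpleGraph V) (X : Set V) (R S : Ray G) : Prop :=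
  ∃ P : ℕ → PathBetween G R.verts S.verts,
    (∀ n : ℕ, ∀ v ∈ (P n).verts, v ∉ X) ∧
    ∀ m n : ℕ, m ≠ n → Disjoint (P m).verts (P n).verts

/-- Two rays are equivalent: there are infinitely many pairwise vertex-disjoint
paths between them. -/
def RayEquiv (G : SimpleGraph V) (R S : Ray G) : Prop := RayEquivAvoiding G ∅ R S

/-- `ε` is an end of `G`: an equivalence class of rays. -/
def IsEnd (G : SimpleGraph V) (ε : Set (Ray G)) : Prop :=
  ε.Nonempty ∧ ∀ R ∈ ε, ∀ S : Ray G, S ∈ ε ↔ RayEquiv G R S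

/-- An end of `G − X`, viewed as an equivalence class of rays of `G` avoiding `X`. -/
def IsEndAvoiding (G : SimpleGraph V) (X : Set V) (δ : Set (Ray G)) : Prop :=
  δ.Nonempty ∧ (∀ R ∈ δ, Disjoint R.verts X) ∧
    ∀ R ∈ δ, ∀ S : Ray G, Disjoint S.verts X → (S ∈ δ ↔ RayEquivAvoiding G X R S)

/-- A family of pairwise disjoint rays, all belonging to `ε`. -/
def DisjointRayFamily {I : Type} (G : SimpleGraph V) (ε : Set (Ray G)) (R : I → Ray G) : Prop :=
  (∀ i, R i ∈ ε) ∧ ∀ i j : I, i ≠ j → Disjoint (R i).verts (R j).verts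

/-- The end `ε` has finite degree (is thin): for some `k` there is no family of
`k+1` pairwise disjoint `ε`-rays. -/
def ThinEnd (G : SimpleGraph V) (ε : Set (Ray G)) : Prop :=
  ∃ k : ℕ, ∀ R : Fin (k + 1) → Ray G, (∀ i, R i ∈ ε) →
    ¬ ∀ i j, i ≠ j → Disjoint (R i).verts (R j).verts

/-- The end `ε` is thick: it contains arbitrarily many disjoint rays. -/
def ThickEnd (G : SimpleGraph V) (ε : Set (Ray G)) : Prop :=
  ∀ n : ℕ, ∃ R : Fin n → Ray G, DisjointRayFamily G ε R

/-- `G` is locally finite. -/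
def LocFin (G : SimpleGraph V) : Prop := ∀ v : V, (G.neighborSet v).Finite

/-- An inflated copy of `G` inside `Γ`: a subgraph `H` of `Γ` with a map `φ`
whose branch sets are nonempty and connected, such that there is an edge of `H`
between the branch sets of `v` and `w` iff `vw ∈ E(G)`, this edge being unique. -/
structure InflatedCopy (G : SimpleGraph V) (Γ : SimpleGraph W) where
  H : Γ.Subgraph
  φ : W → V
  branch_nonempty : ∀ v : V, ∃ w ∈ H.verts, φ w = v
  branch_connected : ∀ v : V, (H.induce {w ∈ H.verts | φ w = v}).Connected
  adj_of_edge : ∀ ⦃a b : W⦄, H.Adj a b → φ a ≠ φ b → G.Adj (φ a) (φ b)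
  edge_of_adj : ∀ ⦃v w : V⦄, G.Adj v w → ∃ a b : W, H.Adj a b ∧ φ a = v ∧ φ b = w
  edge_unique : ∀ ⦃v w : V⦄, G.Adj v w → ∀ a b a' b' : W, H.Adj a b → H.Adj a' b' →
    φ a = v → φ b = w → φ a' = v → φ b' = w → a = a' ∧ b = b'

/-- The branch set of `v` in an inflated copy. -/
def InflatedCopy.branch {G : SimpleGraph V} {Γ : SimpleGraph W} (Hc : InflatedCopy G Γ)
    (v : V) : Set W := {w ∈ Hc.H.verts | Hc.φ w = v}

/-- A tidy inflated copy: each branch set induces a tree, finite whenever the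
corresponding vertex has finite degree. -/
def InflatedCopy.Tidy {G : SimpleGraph V} {Γ : SimpleGraph W} (Hc : InflatedCopy G Γ) : Prop :=
  ∀ v : V, (Hc.H.induce (Hc.branch v)).coe.IsTree ∧
    ((G.neighborSet v).Finite → (Hc.branch v).Finite)

/-- `G` is a minor of `Γ`. -/
def IsMinor (G : SimpleGraph V) (Γ : SimpleGraph W) : Prop := Nonempty (InflatedCopy G Γ)

/-- The disjoint union of `ι` many copies of `G`. -/
def copies (ι : Type) (G : SimpleGraph V) : SimpleGraph (ι × V) where
  Adj a b := a.1 = b.1 ∧ G.Adj a.2 b.2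
  symm := ⟨fun _ _ h => ⟨h.1.symm, h.2.symm⟩⟩
  loopless := ⟨fun a h => G.loopless.irrefl a.2 h.2⟩

/-- `a` and `b` are joined by a walk of `K` avoiding the set `X`. -/
def ReachAvoid {α : Type} (K : SimpleGraph α) (X : Set α) (a b : α) : Prop :=
  ∃ w : K.Walk a b, ∀ x ∈ w.support, x ∉ X


/-! ### Linkages and transition functions -/

/-- A linkage from the family `R` to the family `S` of disjoint rays: a family
of disjoint paths `path i` from a vertex of `R i` to a vertex of `S (σ i)` such
that the concatenated rays form a family of disjoint rays. -/
structure Linkage (Γ : SimpleGraph W) {I J : Type} (R : I → Ray Γ) (S : J → Ray Γ) where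
  σ : I → J
  inj : Function.Injective σ
  exit : I → ℕ
  entry : I → ℕ
  path : ∀ i : I, Γ.Walk ((R i).f (exit i)) ((S (σ i)).f (entry i))
  isPath : ∀ i : I, (path i).IsPath
  meet_init : ∀ i : I, ∀ v ∈ (path i).support,
    (∃ k ≤ exit i, (R i).f k = v) → v = (R i).f (exit i)
  meet_tail : ∀ i : I, ∀ v ∈ (path i).support,
    (∃ k : ℕ, entry i ≤ k ∧ (S (σ i)).f k = v) → v = (S (σ i)).f (entry i)
  init_tail : ∀ i : I, ∀ k ≤ exit i, ∀ k' : ℕ, entry i ≤ k' →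
    (R i).f k = (S (σ i)).f k' → k = exit i ∧ k' = entry i
  disj : ∀ i j : I, i ≠ j → ∀ v : W,
    ((∃ k ≤ exit i, (R i).f k = v) ∨ v ∈ (path i).support ∨
      ∃ k : ℕ, entry i ≤ k ∧ (S (σ i)).f k = v) →
    ((∃ k ≤ exit j, (R j).f k = v) ∨ v ∈ (path j).support ∨
      ∃ k : ℕ, entry j ≤ k ∧ (S (σ j)).f k = v) → False

/-- The vertex set of the `i`-th concatenated ray of a linkage. -/
def Linkage.rverts {Γ : SimpleGraph W} {I J : Type} {R : I → Ray Γ} {S : J → Ray Γ}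
    (L : Linkage Γ R S) (i : I) : Set W :=
  {v | (∃ k ≤ L.exit i, (R i).f k = v) ∨ v ∈ (L.path i).support ∨
    ∃ k : ℕ, L.entry i ≤ k ∧ (S (L.σ i)).f k = v}

/-- A linkage is after `X` if `X` meets each concatenated ray only within the
initial segment of the corresponding ray of `R`. -/
def Linkage.After {Γ : SimpleGraph W} {I J : Type} {R : I → Ray Γ} {S : J → Ray Γ}
    (L : Linkage Γ R S) (X : Set W) : Prop :=
  ∀ i : I, ∀ v ∈ X, v ∈ L.rverts i → ∃ k ≤ L.exit i, (R i).f k = v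

/-- `σ` is a transition function from `R` to `S`: for every finite vertex set `X`
there is a linkage from `R` to `S` after `X` inducing `σ`. -/
def IsTransitionFunction (Γ : SimpleGraph W) {I J : Type} (R : I → Ray Γ) (S : J → Ray Γ)
    (σ : I → J) : Prop :=
  ∀ X : Set W, X.Finite → ∃ L : Linkage Γ R S, L.σ = σ ∧ L.After X

/-- A linkage is transitional if the function it induces is a transition function. -/
def Linkage.Transitional {Γ : SimpleGraph W} {I J : Type} {R : I → Ray Γ} {S : J → Ray Γ}
    (L : Linkage Γ R S) : Prop := IsTransitionFunction Γ R S L.σ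

/-! ### Ray graphs and separation -/

/-- There are infinitely many disjoint paths from `R i` to `R j` meeting no other `R k`. -/
def LinkedRays (Γ : SimpleGraph W) {I : Type} (R : I → Ray Γ) (i j : I) : Prop :=
  ∃ P : ℕ → PathBetween Γ (R i).verts (R j).verts,
    (∀ m n : ℕ, m ≠ n → Disjoint (P m).verts (P n).verts) ∧
    ∀ n : ℕ, ∀ k : I, k ≠ i → k ≠ j → Disjoint (P n).verts (R k).verts

/-- The ray graph of a family of disjoint rays. -/
def rayGraph (Γ : SimpleGraph W) {I : Type} (R : I → Ray Γ) : SimpleGraph I where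
  Adj i j := i ≠ j ∧ (LinkedRays Γ R i j ∨ LinkedRays Γ R j i)
  symm := ⟨fun _ _ h => ⟨h.1.symm, h.2.symm⟩⟩
  loopless := ⟨fun _ h => h.1 rfl⟩

/-- `S` separates `R` from `T'`: the tails of `R` and `T'` disjoint from `S`
belong to different ends of `Γ − V(S)`. -/
def SeparatesRay (Γ : SimpleGraph W) (S R T' : Ray Γ) : Prop :=
  ∀ R' T'' : Ray Γ, R'.IsTailOf R → T''.IsTailOf T' →
    Disjoint R'.verts S.verts → Disjoint T''.verts S.verts →
    ¬ RayEquivAvoiding Γ S.verts R' T''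

/-- `K − c` has precisely two connected components, each of size at least `m`. -/
def TwoCompsAtLeast {I : Type} (K : SimpleGraph I) (c : I) (m : ℕ) : Prop :=
  ∃ A B : Set I, A.Nonempty ∧ B.Nonempty ∧ Disjoint A B ∧ A ∪ B = {i | i ≠ c} ∧
    (∀ a ∈ A, ∀ b ∈ A, ReachAvoid K {c} a b) ∧
    (∀ a ∈ B, ∀ b ∈ B, ReachAvoid K {c} a b) ∧
    (∀ a ∈ A, ∀ b ∈ B, ¬ ReachAvoid K {c} a b) ∧
    (m : ℕ∞) ≤ A.encard ∧ (m : ℕ∞) ≤ B.encard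

/-- `i` is an inner vertex of the (nodup) list `L`. -/
def IsInnerListVertex {n : ℕ} (L : List (Fin n)) (i : Fin n) : Prop :=
  i ∈ L ∧ 0 < L.idxOf i ∧ L.idxOf i + 1 < L.length

/-- The end `ε` splits in `Γ − X` into the two ends `δ` and `δ'`. -/
def SplitsInto (Γ : SimpleGraph W) (ε : Set (Ray Γ)) (X : Set W) (δ δ' : Set (Ray Γ)) : Prop :=
  IsEndAvoiding Γ X δ ∧ IsEndAvoiding Γ X δ' ∧ δ ≠ δ' ∧
    ∀ S ∈ ε, Disjoint (Ray.verts S) X → S ∈ δ ∪ δ'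

/-- `δ` is a sub-end of `δ'`: every ray of `δ` has a tail in `δ'`. -/
def SubEnd (Γ : SimpleGraph W) (δ δ' : Set (Ray Γ)) : Prop :=
  ∀ R ∈ δ, ∃ R' : Ray Γ, R'.IsTailOf R ∧ R' ∈ δ'

/-! ### Half-grid-like ends -/

/-- A witness that the thick end `ε` of `Γ` is half-grid-like: there is `N ∈ ℕ`
and a choice of (correctly oriented) central path for each family of disjoint
`ε`-rays such that: for families of size at least `N + 2` the central path is a
bare path of the ray graph containing all but at most `N` of its vertices, every
vertex whose deletion leaves precisely two components of size at least `N + 1`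
is an inner vertex of the central path, and every transition function between
families of at least `N + 3` disjoint `ε`-rays maps central path vertices to
central path vertices preserving the correct orientation. -/
structure HalfGridLike (Γ : SimpleGraph W) (ε : Set (Ray Γ)) where
  isEnd : IsEnd Γ ε
  thick : ThickEnd Γ ε
  N : ℕ
  central : ∀ {n : ℕ}, (Fin n → Ray Γ) → List (Fin n)
  central_nodup : ∀ {n : ℕ} (R : Fin n → Ray Γ), DisjointRayFamily Γ ε R → N + 2 ≤ n →
    (central R).Nodup
  central_chain : ∀ {n : ℕ} (R : Fin n → Ray Γ), DisjointRayFamily Γ ε R → N + 2 ≤ n →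
    (central R).Chain' (rayGraph Γ R).Adj
  central_large : ∀ {n : ℕ} (R : Fin n → Ray Γ), DisjointRayFamily Γ ε R → N + 2 ≤ n →
    n ≤ (central R).length + N
  central_bare : ∀ {n : ℕ} (R : Fin n → Ray Γ), DisjointRayFamily Γ ε R → N + 2 ≤ n →
    ∀ i : Fin n, IsInnerListVertex (central R) i → ((rayGraph Γ R).neighborSet i).encard = 2
  central_inner : ∀ {n : ℕ} (R : Fin n → Ray Γ), DisjointRayFamily Γ ε R → N + 2 ≤ n →
    ∀ c : Fin n, TwoCompsAtLeast (rayGraph Γ R) c (N + 1) → IsInnerListVertex (central R) c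
  central_map : ∀ {n m : ℕ} (R : Fin n → Ray Γ) (S : Fin m → Ray Γ),
    DisjointRayFamily Γ ε R → DisjointRayFamily Γ ε S → N + 3 ≤ n → N + 3 ≤ m →
    ∀ σ : Fin n → Fin m, IsTransitionFunction Γ R S σ →
    ∀ i ∈ central R, σ i ∈ central S
  central_order : ∀ {n m : ℕ} (R : Fin n → Ray Γ) (S : Fin m → Ray Γ),
    DisjointRayFamily Γ ε R → DisjointRayFamily Γ ε S → N + 3 ≤ n → N + 3 ≤ m →
    ∀ σ : Fin n → Fin m, IsTransitionFunction Γ R S σ →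
    ∀ i ∈ central R, ∀ j ∈ central R, (central R).idxOf i < (central R).idxOf j →
      (central S).idxOf (σ i) < (central S).idxOf (σ j)

/-- A core ray of the half-grid-like end `ε`. -/
def IsCoreRay {Γ : SimpleGraph W} {ε : Set (Ray Γ)} (hg : HalfGridLike Γ ε) (R : Ray Γ) : Prop :=
  R ∈ ε ∧ ∃ (n : ℕ) (F : Fin n → Ray Γ) (c : Fin n),
    DisjointRayFamily Γ ε F ∧ F c = R ∧ TwoCompsAtLeast (rayGraph Γ F) c (hg.N + 1)

/-- `(δ, δ')` is the pair of ends `(⊤(F c, F), ⊥(F c, F))` of `Γ − V(F c)`. -/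
def IsTopBotPair {Γ : SimpleGraph W} {ε : Set (Ray Γ)} (hg : HalfGridLike Γ ε)
    {n : ℕ} (F : Fin n → Ray Γ) (c : Fin n) (δ δ' : Set (Ray Γ)) : Prop :=
  IsEndAvoiding Γ (F c).verts δ ∧ IsEndAvoiding Γ (F c).verts δ' ∧ δ ≠ δ' ∧
  (∀ S ∈ ε, Disjoint (Ray.verts S) (F c).verts → S ∈ δ ∪ δ') ∧
  (∀ i : Fin n, i ∈ hg.central F →
    (hg.central F).idxOf i < (hg.central F).idxOf c → F i ∈ δ) ∧
  ∀ i : Fin n, i ∈ hg.central F →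
    (hg.central F).idxOf c < (hg.central F).idxOf i → F i ∈ δ'

/-- `R ∈ ⊤(ε, S)`: for some family witnessing `S` on a central path, `R` lies in
the top end of `Γ − V(S)`. -/
def InTop {Γ : SimpleGraph W} {ε : Set (Ray Γ)} (hg : HalfGridLike Γ ε) (S R : Ray Γ) : Prop :=
  ∃ (n : ℕ) (F : Fin n → Ray Γ) (c : Fin n) (δ δ' : Set (Ray Γ)),
    DisjointRayFamily Γ ε F ∧ hg.N + 2 ≤ n ∧ F c = S ∧ c ∈ hg.central F ∧
    IsTopBotPair hg F c δ δ' ∧ R ∈ δ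

/-- The relation `≤_ε` on core rays. -/
def coreLE {Γ : SimpleGraph W} {ε : Set (Ray Γ)} (hg : HalfGridLike Γ ε) (R S : Ray Γ) : Prop :=
  R = S ∨ ∃ a b : ℕ, Disjoint (R.tail a).verts (S.tail b).verts ∧
    InTop hg (S.tail b) (R.tail a)

/-- `R̄` (with inclusion `ι`) is an extension of the family `R` of core rays as in
Lemma 5.19: every ray of `R` disconnects the ray graph of `R̄` into exactly two
components of size at least `N + 1` and is an inner vertex of the central path,
and `|R̄| = |R| + 2N + 2`. -/
def IsBarExtension {Γ : SimpleGraph W} {ε : Set (Ray Γ)} (hg : HalfGridLike Γ ε)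
    {k : ℕ} (R : Fin k → Ray Γ) (Rbar : Fin (k + (2 * hg.N + 2)) → Ray Γ)
    (ι : Fin k ↪ Fin (k + (2 * hg.N + 2))) : Prop :=
  DisjointRayFamily Γ ε Rbar ∧ (∀ i, Rbar (ι i) = R i) ∧
  (∀ i : Fin k, TwoCompsAtLeast (rayGraph Γ Rbar) (ι i) (hg.N + 1)) ∧
  ∀ i : Fin k, IsInnerListVertex (hg.central Rbar) (ι i)

/-- A linkage is preserving on the subfamily `R` (included via `ι`): it links the
rays of `R` to core rays and preserves the order `≤_ε`. -/
def PreservingOn {Γ : SimpleGraph W} {ε : Set (Ray Γ)} (hg : HalfGridLike Γ ε)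
    {k p m : ℕ} (R : Fin k → Ray Γ) (ι : Fin k ↪ Fin p)
    {Rbar : Fin p → Ray Γ} {S : Fin m → Ray Γ} (L : Linkage Γ Rbar S) : Prop :=
  (∀ i : Fin k, IsCoreRay hg (S (L.σ (ι i)))) ∧
  ∀ i j : Fin k, coreLE hg (R i) (R j) → coreLE hg (S (L.σ (ι i))) (S (L.σ (ι j)))


/-! ### Tree-decompositions -/

/-- A tree-decomposition of `G` with decomposition tree on the vertex type `T`. -/
structure TreeDecomp (G : SimpleGraph V) (T : Type) where
  tree : SimpleGraph T
  isTree : tree.IsTree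
  part : T → Set V
  cover : ∀ v : V, ∃ t : T, v ∈ part t
  edge_cover : ∀ ⦃u v : V⦄, G.Adj u v → ∃ t : T, u ∈ part t ∧ v ∈ part t
  interpolate : ∀ ⦃t₁ t₂ t₃ : T⦄ (p : tree.Walk t₁ t₃), p.IsPath → t₂ ∈ p.support →
    part t₁ ∩ part t₃ ⊆ part t₂

/-- A rooted tree-decomposition. -/
structure RootedTreeDecomp (G : SimpleGraph V) (T : Type) extends TreeDecomp G T where
  root : T

/-- An edge of the decomposition tree, oriented away from the root: `tgt` is the
endvertex farther from the root. -/
structure RootedTreeDecomp.Edge {G : SimpleGraph V} {T : Type} (D : RootedTreeDecomp G T) where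
  src : T
  tgt : T
  adj : D.tree.Adj src tgt
  away : D.tree.dist D.root tgt = D.tree.dist D.root src + 1

/-- The vertex set of the component `T_{e⁺}` of `T − e` containing `e.tgt`. -/
def RootedTreeDecomp.above {G : SimpleGraph V} {T : Type} (D : RootedTreeDecomp G T)
    (e : D.Edge) : Set T :=
  {t | ∃ w : D.tree.Walk t e.tgt, e.src ∉ w.support}

/-- The bough `B(e)`: the union of the parts indexed by `T_{e⁺}`. -/
def RootedTreeDecomp.bough {G : SimpleGraph V} {T : Type} (D : RootedTreeDecomp G T)
    (e : D.Edge) : Set V :=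
  {v | ∃ t ∈ D.above e, v ∈ D.part t}

/-- The set `A(e)`: the union of the parts indexed outside `T_{e⁺}`. -/
def RootedTreeDecomp.sideA {G : SimpleGraph V} {T : Type} (D : RootedTreeDecomp G T)
    (e : D.Edge) : Set V :=
  {v | ∃ t : T, t ∉ D.above e ∧ v ∈ D.part t}

/-- The separator `S(e) = V_{e⁻} ∩ V_{e⁺}`. -/
def RootedTreeDecomp.sep {G : SimpleGraph V} {T : Type} (D : RootedTreeDecomp G T)
    (e : D.Edge) : Set V :=
  D.part e.src ∩ D.part e.tgt

/-- The graph `Ḡ[B(e)]`: the induced graph on `B(e)` with all edges between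
vertices of `S(e)` deleted. -/
def RootedTreeDecomp.barB {G : SimpleGraph V} {T : Type} (D : RootedTreeDecomp G T)
    (e : D.Edge) : SimpleGraph (D.bough e) where
  Adj a b := G.Adj ↑a ↑b ∧ ¬((↑a : V) ∈ D.sep e ∧ (↑b : V) ∈ D.sep e)
  symm := ⟨fun _ _ h => ⟨h.1.symm, fun hc => h.2 ⟨hc.2, hc.1⟩⟩⟩
  loopless := ⟨fun a h => G.loopless.irrefl ↑a h.1⟩

/-- A witness for the self-similarity of the bough `B(e)` along the family of
rays `Rfam`, of distance at least `n`: an edge `e'` of `T_{e⁺}` at distance at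
least `n`, together with an inflated copy `Wcopy` of `Ḡ[B(e)]` inside `G[B(e')]`
such that each ray `Rfam s` (for `s ∈ S(e)`) meets `S(e')` only inside the
branch set of `s`. -/
structure SelfSimilarityWitness {G : SimpleGraph V} {T : Type} (D : RootedTreeDecomp G T)
    (e : D.Edge) (Rfam : V → Ray G) (n : ℕ) where
  e' : D.Edge
  habove : e'.src ∈ D.above e
  hfar : n ≤ D.tree.dist e.src e'.src
  Wcopy : InflatedCopy (D.barB e) G
  hsub : Wcopy.H.verts ⊆ D.bough e'
  hmeets : ∀ s ∈ D.sep e, ∃ k : ℕ, (Rfam s).f k ∈ D.sep e'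
  hbranch : ∀ s ∈ D.sep e, ∀ k : ℕ, (Rfam s).f k ∈ D.sep e' →
    (Rfam s).f k ∈ Wcopy.H.verts ∧ (↑(Wcopy.φ ((Rfam s).f k)) : V) = s

/-- The bough `B(e)` is self-similar towards the end `ω` of `G`. -/
def BoughSelfSimilar {G : SimpleGraph V} {T : Type} (D : RootedTreeDecomp G T) (e : D.Edge)
    (ω : Set (Ray G)) : Prop :=
  ∃ Rfam : V → Ray G,
    (∀ s ∈ D.sep e, (Rfam s).f 0 = s ∧ Rfam s ∈ ω) ∧
    (∀ s ∈ D.sep e, ∀ s' ∈ D.sep e, s ≠ s' → Disjoint (Rfam s).verts (Rfam s').verts) ∧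
    ∀ n : ℕ, Nonempty (SelfSimilarityWitness D e Rfam n)

/-- An extensive tree-decomposition: the tree is locally finite, every part is
finite, every vertex lies in finitely many parts, and every bough is
self-similar towards some end of `G`. -/
def Extensive {G : SimpleGraph V} {T : Type} (D : RootedTreeDecomp G T) : Prop :=
  (∀ t : T, (D.tree.neighborSet t).Finite) ∧
  (∀ t : T, (D.part t).Finite) ∧
  (∀ v : V, {t : T | v ∈ D.part t}.Finite) ∧
  ∀ e : D.Edge, ∃ ω : Set (Ray G), IsEnd G ω ∧ BoughSelfSimilar D e ω

/-- A lean tree-decomposition. -/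
def LeanTD {G : SimpleGraph V} {T : Type} (D : RootedTreeDecomp G T) : Prop :=
  ∀ (k : ℕ) (t₁ t₂ : T) (X₁ X₂ : Set V), X₁ ⊆ D.part t₁ → X₂ ⊆ D.part t₂ →
    (k : ℕ∞) ≤ X₁.encard → (k : ℕ∞) ≤ X₂.encard →
    (∃ P : Fin k → PathBetween G X₁ X₂, ∀ i j, i ≠ j → Disjoint (P i).verts (P j).verts) ∨
    ∃ t : T, (∀ p : D.tree.Walk t₁ t₂, p.IsPath → t ∈ p.support) ∧ (D.part t).encard < (k : ℕ∞)

/-- The ray `0 – 1 – 2 – ⋯` as a graph on `ℕ`. -/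
def pathGraphN : SimpleGraph ℕ where
  Adj a b := a + 1 = b ∨ b + 1 = a
  symm := ⟨fun _ _ h => h.symm⟩
  loopless := ⟨fun a h => by rcases h with h | h <;> omega⟩

/-! ### Pullbacks and end components -/

/-- `S` is a pullback of the ray `R` of `G` to the inflated copy `Hc`: `S`
traverses the branch sets of the vertices of `R` consecutively and in order. -/
def IsPullbackRay {G : SimpleGraph V} {Γ : SimpleGraph W} (Hc : InflatedCopy G Γ)
    (R : Ray G) (S : Ray Γ) : Prop :=
  ∃ g : ℕ → ℕ, Monotone g ∧ g 0 = 0 ∧ (∀ m : ℕ, ∃ k, m ≤ g k) ∧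
    (∀ k, g (k + 1) ≤ g k + 1) ∧
    ∀ k, S.f k ∈ Hc.H.verts ∧ Hc.φ (S.f k) = R.f (g k)

/-- The component `C(X, δ)` of `Γ − X` in which every ray of `δ` has a tail. -/
def endComp (Γ : SimpleGraph W) (X : Set W) (δ : Set (Ray Γ)) : Set W :=
  {w | ∃ R ∈ δ, ∃ k : ℕ, (∀ j : ℕ, k ≤ j → R.f j ∉ X) ∧ ReachAvoid Γ X w (R.f k)}


section Transitional

variable {Γ : SimpleGraph W} {I J : Type} {R : I → Ray Γ} {S : J → Ray Γ}

theorem Linkage.After.mono {L : Linkage Γ R S} {X Y : Set W} (hY : L.After Y) (hXY : X ⊆ Y) :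
    L.After X :=
  fun i v hv => hY i v (hXY hv)

theorem exists_finite_forall_after_imp_isTransitionFunction (σ : I → J) :
    ∃ X : Set W, X.Finite ∧
      ∀ L : Linkage Γ R S, L.σ = σ → L.After X → IsTransitionFunction Γ R S σ := by
  by_cases hσ : IsTransitionFunction Γ R S σ
  · exact ⟨∅, Set.finite_empty, fun _ _ _ => hσ⟩
  · obtain ⟨X, hX, hno⟩ : ∃ X : Set W, X.Finite ∧ ¬∃ L : Linkage Γ R S, L.σ = σ ∧ L.After X := by
      simpa [IsTransitionFunction] using hσ
    exact ⟨X, hX, fun L hLσ hL => (hno ⟨L, hLσ, hL⟩).elim⟩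

-- Only finitely many maps `I → J` exist, so one finite set serves all of them at once.
theorem exists_finite_forall_after_transitional [Finite I] [Finite J] :
    ∃ X : Set W, X.Finite ∧ ∀ L : Linkage Γ R S, L.After X → L.Transitional := by
  choose X hX hXσ using
    exists_finite_forall_after_imp_isTransitionFunction (Γ := Γ) (R := R) (S := S)
  exact ⟨⋃ σ, X σ, Set.finite_iUnion hX, fun L hL =>
    hXσ L.σ L rfl (hL.mono (Set.subset_iUnion X L.σ))⟩

end Transitional

theorem exists_finite_set_linkage_after_transitional_general
    (Γ : SimpleGraph W)
    {n m : ℕ} (R : Fin n → Ray Γ) (S : Fin m → Ray Γ) :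
    ∃ X : Set W, X.Finite ∧ ∀ L : Linkage Γ R S, L.After X → L.Transitional :=
  exists_finite_forall_after_transitional

/-- For finite families of disjoint `ε`-rays `R`, `S` there is a finite
vertex set `X` such that every linkage from `R` to `S` after `X` is transitional. -/
theorem exists_finite_set_linkage_after_transitional
    (Γ : SimpleGraph W) (ε : Set (Ray Γ)) (hε : IsEnd Γ ε)
    {n m : ℕ} (R : Fin n → Ray Γ) (S : Fin m → Ray Γ)
    (hR : DisjointRayFamily Γ ε R) (hS : DisjointRayFamily Γ ε S) :
    ∃ X : Set W, X.Finite ∧ ∀ L : Linkage Γ R S, L.After X → L.Transitional :=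
  exists_finite_set_linkage_after_transitional_general Γ R S

end Ubiquity
end

section
/- Let Γ be a graph, ε an end of Γ, X ⊆ V(Γ) a finite set, and let R = (R_i : i ∈ I) and S = (S_j : j ∈ J) be finite families of disjoint ε-rays with |I| ≤ |J|. Then there is a finite subgraph Y of Γ (a transition box between R and S after X) such that for every transition function σ from R to S there is a linkage P_σ from R to S inducing σ, all of whose paths lie in Y, which is after X. -/
set_option autoImplicit false

namespace Ubiquity

variable {V W T : Type}

/-! There are only finitely many functions `I → J`, so fixing one linkage after `X` for each
transition function and taking the union of their paths gives a finite subgraph. -/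

theorem _root_.SimpleGraph.Walk.mem_verts_and_mem_edgeSet_of_toSubgraph_le {G : SimpleGraph V}
    {u v : V} {p : G.Walk u v} {Y : G.Subgraph} (h : p.toSubgraph ≤ Y) :
    (∀ x ∈ p.support, x ∈ Y.verts) ∧ ∀ e ∈ p.edges, e ∈ Y.edgeSet :=
  ⟨fun _ hx => h.1 (p.mem_verts_toSubgraph.2 hx),
    fun _ he => SimpleGraph.Subgraph.edgeSet_mono h (p.mem_edges_toSubgraph.2 he)⟩

theorem _root_.SimpleGraph.Walk.toSubgraph_verts_finite {G : SimpleGraph V} {u v : V}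
    (p : G.Walk u v) : p.toSubgraph.verts.Finite := by
  rw [SimpleGraph.Walk.verts_toSubgraph]
  exact p.support.finite_toSet

section TransitionBox

variable {Γ : SimpleGraph W} {I J : Type} {R : I → Ray Γ} {S : J → Ray Γ}

def Linkage.pathsSubgraph (L : Linkage Γ R S) : Γ.Subgraph := ⨆ i, (L.path i).toSubgraph

theorem Linkage.toSubgraph_path_le_pathsSubgraph (L : Linkage Γ R S) (i : I) :
    (L.path i).toSubgraph ≤ L.pathsSubgraph :=
  le_iSup (fun i => (L.path i).toSubgraph) i

theorem Linkage.pathsSubgraph_verts_finite [Finite I] (L : Linkage Γ R S) :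
    L.pathsSubgraph.verts.Finite := by
  rw [pathsSubgraph, SimpleGraph.Subgraph.verts_iSup]
  exact Set.finite_iUnion fun i => (L.path i).toSubgraph_verts_finite

variable (Γ R S) in
def IsTransitionBox (X : Set W) (Y : Γ.Subgraph) : Prop :=
  ∀ σ : I → J, IsTransitionFunction Γ R S σ →
    ∃ L : Linkage Γ R S, L.σ = σ ∧ L.After X ∧ L.pathsSubgraph ≤ Y

variable (R S) in
theorem exists_isTransitionBox [Finite I] [Finite J] {X : Set W} (hX : X.Finite) :
    ∃ Y : Γ.Subgraph, Y.verts.Finite ∧ IsTransitionBox Γ R S X Y := by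
  choose L hLσ hLX using fun σ : {σ : I → J // IsTransitionFunction Γ R S σ} => σ.2 X hX
  refine ⟨⨆ σ, (L σ).pathsSubgraph, ?_, fun σ hσ => ⟨L ⟨σ, hσ⟩, hLσ _, hLX _, ?_⟩⟩
  · rw [SimpleGraph.Subgraph.verts_iSup]
    exact Set.finite_iUnion fun σ => (L σ).pathsSubgraph_verts_finite
  · exact le_iSup (fun σ => (L σ).pathsSubgraph) ⟨σ, hσ⟩

end TransitionBox

theorem transition_box_exists_general
    (Γ : SimpleGraph W)
    (X : Set W) (hX : X.Finite)
    {n m : ℕ} (R : Fin n → Ray Γ) (S : Fin m → Ray Γ) :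
    ∃ Y : Γ.Subgraph, Y.verts.Finite ∧
      ∀ σ : Fin n → Fin m, IsTransitionFunction Γ R S σ →
        ∃ L : Linkage Γ R S, L.σ = σ ∧ L.After X ∧
          ∀ i : Fin n, (∀ v ∈ (L.path i).support, v ∈ Y.verts) ∧
            ∀ ed ∈ (L.path i).edges, ed ∈ Y.edgeSet := by
  obtain ⟨Y, hYfin, hY⟩ := exists_isTransitionBox R S hX
  refine ⟨Y, hYfin, fun σ hσ => ?_⟩
  obtain ⟨L, hLσ, hLX, hLY⟩ := hY σ hσ
  exact ⟨L, hLσ, hLX, fun i => SimpleGraph.Walk.mem_verts_and_mem_edgeSet_of_toSubgraph_le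
    ((L.toSubgraph_path_le_pathsSubgraph i).trans hLY)⟩

/-- Transition boxes exist: a finite subgraph `Y` such that every
transition function from `R` to `S` is induced by a linkage after `X` all of
whose paths lie in `Y`. -/
theorem transition_box_exists
    (Γ : SimpleGraph W) (ε : Set (Ray Γ)) (hε : IsEnd Γ ε)
    (X : Set W) (hX : X.Finite)
    {n m : ℕ} (hnm : n ≤ m) (R : Fin n → Ray Γ) (S : Fin m → Ray Γ)
    (hR : DisjointRayFamily Γ ε R) (hS : DisjointRayFamily Γ ε S) :
    ∃ Y : Γ.Subgraph, Y.verts.Finite ∧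
      ∀ σ : Fin n → Fin m, IsTransitionFunction Γ R S σ →
        ∃ L : Linkage Γ R S, L.σ = σ ∧ L.After X ∧
          ∀ i : Fin n, (∀ v ∈ (L.path i).support, v ∈ Y.verts) ∧
            ∀ ed ∈ (L.path i).edges, ed ∈ Y.edgeSet :=
  transition_box_exists_general Γ X hX R S

end Ubiquity
end

section
/- Let G be a locally finite connected graph with an extensive tree-decomposition (T, (V_t)). For each edge e of T, each n ∈ ℕ, and each witness W of the self-similarity of the bough B(e) of distance at least n, the graph G[A(e)] ⊕_{R_e} W is well-defined and is a push-out of G along e to depth n. In particular, G has a push-out along e to depth n for every n ∈ ℕ. -/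
set_option autoImplicit false

namespace Ubiquity

variable {V W T : Type}

/-!
The push-out keeps `G[A(e)]` pointwise, replaces `Ḡ[B(e)]` by the copy `W ⊆ G[B(e')]`, and
joins each `s ∈ S(e)` to its `W`-branch set along `R_{e,s}`. After its first vertex the ray
`R_{e,s}` avoids `S(e)`, and it can only leave `B(e)` through `S(e)`; so its segment up to `W`
stays in `B(e)` and meets `A(e)` only in `s`. It first enters `B(e') ⊇ W` through `S(e')`,
where the witness places it in the branch set of `s`, so the segment ends in that branch set.
Every edge of `G` lies in `G[A(e)]` or in `Ḡ[B(e)]`, and `A(e) ∩ B(e) = S(e)`; hence every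
edge of `G` is realised exactly once, either in `G[A(e)]` or in `W`.
-/

section

open SimpleGraph

theorem _root_.SimpleGraph.Subgraph.induce_singleton_connected {G : SimpleGraph V}
    (H : G.Subgraph) (v : V) : (H.induce {v}).Connected :=
  have : Subsingleton (H.induce {v}).verts := Set.subsingleton_singleton.coe_sort
  (H.induce {v}).connected_iff.mpr ⟨⟨.of_subsingleton⟩, v, rfl⟩

theorem _root_.SimpleGraph.Subgraph.induce_pair_connected_of_adj {G : SimpleGraph V}
    {H : G.Subgraph} {u v : V} (h : H.Adj u v) : (H.induce {u, v}).Connected := by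
  refine (Subgraph.subgraphOfAdj_connected (H.adj_sub h)).mono
    ⟨by simp, fun a b hab => ?_⟩ (by simp)
  simp only [subgraphOfAdj_adj, Sym2.eq_iff] at hab
  rcases hab with ⟨rfl, rfl⟩ | ⟨rfl, rfl⟩
  · exact ⟨by simp, by simp, h⟩
  · exact ⟨by simp, by simp, h.symm⟩

theorem _root_.SimpleGraph.Subgraph.induce_image_Iic_connected {G : SimpleGraph V}
    (H : G.Subgraph) (f : ℕ → V) {m : ℕ} (hf : ∀ k < m, H.Adj (f k) (f (k + 1))) :
    (H.induce (f '' Set.Iic m)).Connected := by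
  induction m with
  | zero =>
    rw [show Set.Iic 0 = {0} by ext; simp, Set.image_singleton]
    exact H.induce_singleton_connected (f 0)
  | succ m ih =>
    rw [show Set.Iic (m + 1) = Set.Iic m ∪ {m, m + 1} by ext; simp; omega, Set.image_union,
      Set.image_pair]
    exact Subgraph.induce_union_connected
      (ih fun k hk => hf k (by omega)).preconnected
      (Subgraph.induce_pair_connected_of_adj (hf m (by omega))).preconnected
      ⟨f m, Set.mem_image_of_mem f Set.self_mem_Iic, .inl rfl⟩

theorem _root_.SimpleGraph.IsTree.length_eq_dist {Γ : SimpleGraph T} (hΓ : Γ.IsTree) {a b : T}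
    {p : Γ.Walk a b} (hp : p.IsPath) : p.length = Γ.dist a b := by
  obtain ⟨q, hq, hlen⟩ := hΓ.connected.exists_path_of_dist a b
  rw [← hlen, Subtype.mk.inj ((hΓ.isAcyclic.subsingleton_path a b).elim ⟨p, hp⟩ ⟨q, hq⟩)]

theorem _root_.SimpleGraph.IsTree.dist_eq_add_of_mem_support {Γ : SimpleGraph T}
    (hΓ : Γ.IsTree) {a b x : T} {p : Γ.Walk a b} (hp : p.IsPath) (hx : x ∈ p.support) :
    Γ.dist a b = Γ.dist a x + Γ.dist x b := by
  classical
  rw [← hΓ.length_eq_dist hp, ← hΓ.length_eq_dist (hp.takeUntil hx),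
    ← hΓ.length_eq_dist (hp.dropUntil hx), ← Walk.length_append, Walk.take_spec]

end

namespace RootedTreeDecomp

open SimpleGraph

variable {G : SimpleGraph V} {D : RootedTreeDecomp G T}

theorem tgt_mem_above (e : D.Edge) : e.tgt ∈ D.above e :=
  ⟨.nil, by simpa using e.adj.ne⟩

theorem src_notMem_above (e : D.Edge) : e.src ∉ D.above e :=
  fun ⟨w, hw⟩ => hw w.start_mem_support

theorem tgt_mem_support_of_mem_above (e : D.Edge) {t : T} (ht : t ∈ D.above e)
    {p : D.tree.Walk t e.src} (hp : p.IsPath) : e.tgt ∈ p.support := by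
  classical
  obtain ⟨w, hw⟩ := ht
  exact D.isTree.isAcyclic.mem_support_of_ne_mem_support_of_adj_of_isPath hp w.bypass_isPath
    e.adj fun h => hw (w.support_bypass_subset_support h)

theorem src_tgt_mem_support (e : D.Edge) {t t' : T} (ht : t ∉ D.above e)
    (ht' : t' ∈ D.above e) {p : D.tree.Walk t t'} (hp : p.IsPath) :
    e.src ∈ p.support ∧ e.tgt ∈ p.support := by
  classical
  obtain ⟨w, hw⟩ := ht'
  have hsrc : e.src ∈ p.support := by
    by_contra h
    exact ht ⟨p.append w, by simp [Walk.mem_support_append_iff, h, hw]⟩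
  refine ⟨hsrc, p.support_dropUntil_subset_support hsrc ?_⟩
  simpa using tgt_mem_support_of_mem_above e ⟨w, hw⟩ (hp.dropUntil hsrc).reverse

theorem part_inter_subset_sep (e : D.Edge) {t t' : T} (ht : t ∉ D.above e)
    (ht' : t' ∈ D.above e) : D.part t ∩ D.part t' ⊆ D.sep e := by
  classical
  obtain ⟨w⟩ := D.isTree.connected t t'
  obtain ⟨hsrc, htgt⟩ := src_tgt_mem_support e ht ht' w.bypass_isPath
  exact fun v hv => ⟨D.interpolate _ w.bypass_isPath hsrc hv,
    D.interpolate _ w.bypass_isPath htgt hv⟩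

theorem root_notMem_above (e : D.Edge) : D.root ∉ D.above e := by
  classical
  rintro ⟨w, hw⟩
  have hp : (w.bypass.concat e.adj.symm).IsPath :=
    w.bypass_isPath.concat (fun h => hw (w.support_bypass_subset_support h)) e.adj.symm
  have h₁ := D.isTree.length_eq_dist hp
  have h₂ := D.isTree.length_eq_dist w.bypass_isPath
  have := e.away
  rw [Walk.length_concat] at h₁
  omega

theorem dist_root_of_mem_above (e : D.Edge) {t : T} (ht : t ∈ D.above e) :
    D.tree.dist D.root t = D.tree.dist D.root e.src + D.tree.dist e.src t := by
  classical
  obtain ⟨w⟩ := D.isTree.connected D.root t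
  exact D.isTree.dist_eq_add_of_mem_support w.bypass_isPath
    (src_tgt_mem_support e (root_notMem_above e) ht w.bypass_isPath).1

theorem src_notMem_above_of_src_mem_above {e e' : D.Edge} (h : e'.src ∈ D.above e) :
    e.src ∉ D.above e' := by
  intro h'
  have h₁ := dist_root_of_mem_above e h
  have h₂ := dist_root_of_mem_above e' h'
  have : D.tree.dist e.src e'.src = D.tree.dist e'.src e.src := dist_comm
  rw [D.isTree.connected.dist_eq_zero_iff.mp (by omega : D.tree.dist e.src e'.src = 0)] at h'
  exact src_notMem_above e' h'

theorem tgt_mem_above_of_src_mem_above {e e' : D.Edge} (h : e'.src ∈ D.above e) :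
    e'.tgt ∈ D.above e := by
  by_contra h'
  have hp : (Walk.cons e'.adj.symm .nil : D.tree.Walk e'.tgt e'.src).IsPath := by
    simp [e'.adj.ne']
  obtain ⟨hsrc, htgt⟩ := src_tgt_mem_support e h' h hp
  simp only [Walk.support_cons, Walk.support_nil, List.mem_cons,
    List.not_mem_nil, or_false] at hsrc htgt
  have := e.away
  have := e'.away
  have := e.adj.ne
  have := src_notMem_above e
  -- otherwise `e'` is `e` reversed, but both edges point away from the root
  grind

theorem above_subset_above {e e' : D.Edge} (h : e'.src ∈ D.above e) :
    D.above e' ⊆ D.above e := by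
  classical
  rintro t ⟨w, hw⟩
  obtain ⟨q, hq⟩ := tgt_mem_above_of_src_mem_above h
  by_cases hc : e.src ∈ w.support
  · exact absurd ⟨_, fun hx => hw (w.support_dropUntil_subset_support hc hx)⟩
      (src_notMem_above_of_src_mem_above h)
  · exact ⟨w.append q, by simp [Walk.mem_support_append_iff, hc, hq]⟩

theorem bough_subset_bough {e e' : D.Edge} (h : e'.src ∈ D.above e) :
    D.bough e' ⊆ D.bough e :=
  fun _ ⟨t, ht, hv⟩ => ⟨t, above_subset_above h ht, hv⟩

theorem sideA_subset_sideA {e e' : D.Edge} (h : e'.src ∈ D.above e) :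
    D.sideA e ⊆ D.sideA e' :=
  fun _ ⟨t, ht, hv⟩ => ⟨t, fun ht' => ht (above_subset_above h ht'), hv⟩

theorem sep_subset_bough (e : D.Edge) : D.sep e ⊆ D.bough e :=
  fun _ hv => ⟨e.tgt, tgt_mem_above e, hv.2⟩

theorem sep_subset_sideA (e : D.Edge) : D.sep e ⊆ D.sideA e :=
  fun _ hv => ⟨e.src, src_notMem_above e, hv.1⟩

theorem mem_sideA_of_notMem_bough (e : D.Edge) {v : V} (hv : v ∉ D.bough e) :
    v ∈ D.sideA e := by
  obtain ⟨t, ht⟩ := D.cover v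
  exact ⟨t, fun h => hv ⟨t, h, ht⟩, ht⟩

theorem mem_sep_of_mem_sideA_of_mem_bough (e : D.Edge) {v : V} (hA : v ∈ D.sideA e)
    (hB : v ∈ D.bough e) : v ∈ D.sep e := by
  obtain ⟨t, ht, hv⟩ := hA
  obtain ⟨t', ht', hv'⟩ := hB
  exact part_inter_subset_sep e ht ht' ⟨hv, hv'⟩

theorem mem_sep_of_adj_of_notMem_bough (e : D.Edge) {u v : V} (h : G.Adj u v)
    (hu : u ∉ D.bough e) (hv : v ∈ D.bough e) : v ∈ D.sep e := by
  obtain ⟨t, hut, hvt⟩ := D.edge_cover h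
  obtain ⟨t', ht', hv'⟩ := hv
  exact part_inter_subset_sep e (fun ht => hu ⟨t, ht, hut⟩) ht' ⟨hvt, hv'⟩

theorem sideA_or_barB_of_adj (e : D.Edge) {v w : V} (h : G.Adj v w) :
    (v ∈ D.sideA e ∧ w ∈ D.sideA e) ∨
      ∃ (hv : v ∈ D.bough e) (hw : w ∈ D.bough e), (D.barB e).Adj ⟨v, hv⟩ ⟨w, hw⟩ := by
  by_cases hv : v ∈ D.bough e <;> by_cases hw : w ∈ D.bough e
  · by_cases hs : v ∈ D.sep e ∧ w ∈ D.sep e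
    · exact .inl ⟨sep_subset_sideA e hs.1, sep_subset_sideA e hs.2⟩
    · exact .inr ⟨hv, hw, h, hs⟩
  · exact .inl ⟨sep_subset_sideA e (mem_sep_of_adj_of_notMem_bough e h.symm hw hv),
      mem_sideA_of_notMem_bough e hw⟩
  · exact .inl ⟨mem_sideA_of_notMem_bough e hv,
      sep_subset_sideA e (mem_sep_of_adj_of_notMem_bough e h hv hw)⟩
  · exact .inl ⟨mem_sideA_of_notMem_bough e hv, mem_sideA_of_notMem_bough e hw⟩

theorem ray_sInf_mem_sep (e : D.Edge) (R : Ray G) (h₀ : R.f 0 ∈ D.sideA e) {k : ℕ}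
    (hk : R.f k ∈ D.bough e) : R.f (sInf {k | R.f k ∈ D.bough e}) ∈ D.sep e := by
  have hmem : R.f (sInf {k | R.f k ∈ D.bough e}) ∈ D.bough e :=
    Nat.sInf_mem (s := {k | R.f k ∈ D.bough e}) ⟨k, hk⟩
  rcases hj : sInf {k | R.f k ∈ D.bough e} with _ | j
  · rw [hj] at hmem
    exact mem_sep_of_mem_sideA_of_mem_bough e h₀ hmem
  · rw [hj] at hmem
    exact mem_sep_of_adj_of_notMem_bough e (R.adj j)
      (Nat.notMem_of_lt_sInf (s := {k | R.f k ∈ D.bough e}) (by omega)) hmem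

theorem ray_mem_bough_of_le (e : D.Edge) (R : Ray G) {m : ℕ} (hm : R.f m ∈ D.bough e)
    (havoid : ∀ k < m, R.f (k + 1) ∉ D.sep e) {k : ℕ} (hk : k ≤ m) : R.f k ∈ D.bough e := by
  refine Nat.decreasingInduction (motive := fun k _ => R.f k ∈ D.bough e)
    (fun k hk ih => ?_) hm hk
  by_contra h
  exact havoid k hk (mem_sep_of_adj_of_notMem_bough e (R.adj k) h ih)

/-- The family `R_e`, without the requirement that its rays are `ω`-rays. -/
structure IsSepRayFamily (D : RootedTreeDecomp G T) (e : D.Edge) (R : V → Ray G) : Prop where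
  start : ∀ s ∈ D.sep e, (R s).f 0 = s
  disjoint : ∀ s ∈ D.sep e, ∀ s' ∈ D.sep e, s ≠ s' → Disjoint (R s).verts (R s').verts

theorem IsSepRayFamily.notMem_sep {e : D.Edge} {R : V → Ray G} (hR : D.IsSepRayFamily e R)
    {s : V} (hs : s ∈ D.sep e) {k : ℕ} (hk : 0 < k) : (R s).f k ∉ D.sep e := by
  intro hsep
  by_cases heq : (R s).f k = s
  · have := (R s).inj (heq.trans (hR.start s hs).symm)
    omega
  · exact Set.disjoint_left.mp (hR.disjoint s hs _ hsep (Ne.symm heq)) ⟨k, rfl⟩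
      ⟨0, hR.start _ hsep⟩

end RootedTreeDecomp

namespace SelfSimilarityWitness

open SimpleGraph RootedTreeDecomp

variable {G : SimpleGraph V} {D : RootedTreeDecomp G T} {e : D.Edge} {Rfam : V → Ray G}
  {n : ℕ} (Wit : SelfSimilarityWitness D e Rfam n)

noncomputable def entry (s : V) : ℕ := sInf {k | (Rfam s).f k ∈ Wit.Wcopy.H.verts}

def segment (s : V) : Set V := (Rfam s).f '' Set.Iic (Wit.entry s)

def copyBranch (v : V) : Set V := {w | w ∈ Wit.Wcopy.H.verts ∧ (↑(Wit.Wcopy.φ w) : V) = v}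

def RayEdge (a b : V) : Prop :=
  ∃ s ∈ D.sep e, ∃ k < Wit.entry s, (Rfam s).f k = a ∧ (Rfam s).f (k + 1) = b

def pushOutSubgraph : G.Subgraph where
  verts := {w | w ∈ D.sideA e ∨ w ∈ Wit.Wcopy.H.verts ∨ ∃ s ∈ D.sep e, w ∈ Wit.segment s}
  Adj a b := (a ∈ D.sideA e ∧ b ∈ D.sideA e ∧ G.Adj a b) ∨ Wit.Wcopy.H.Adj a b ∨
    Wit.RayEdge a b ∨ Wit.RayEdge b a
  adj_sub := by
    rintro a b (⟨-, -, h⟩ | h | ⟨s, -, k, -, rfl, rfl⟩ | ⟨s, -, k, -, rfl, rfl⟩)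
    · exact h
    · exact Wit.Wcopy.H.adj_sub h
    · exact (Rfam s).adj k
    · exact ((Rfam s).adj k).symm
  edge_vert := by
    rintro a b (⟨h, -, -⟩ | h | ⟨s, hs, k, hk, rfl, -⟩ | ⟨s, hs, k, hk, -, rfl⟩)
    · exact .inl h
    · exact .inr (.inl (Wit.Wcopy.H.edge_vert h))
    · exact .inr (.inr ⟨s, hs, k, hk.le, rfl⟩)
    · exact .inr (.inr ⟨s, hs, k + 1, hk, rfl⟩)
  symm := ⟨fun a b => by
    rintro (⟨ha, hb, h⟩ | h | h | h)
    exacts [.inl ⟨hb, ha, h.symm⟩, .inr (.inl h.symm), .inr (.inr (.inr h)),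
      .inr (.inr (.inl h))]⟩

open Classical in
noncomputable def pushOutMap (w : V) : V :=
  if w ∈ Wit.Wcopy.H.verts then ↑(Wit.Wcopy.φ w)
  else if h : ∃ s ∈ D.sep e, w ∈ Wit.segment s then h.choose else w

variable {Wit} {s v w a b : V}

theorem ray_entry_mem (hs : s ∈ D.sep e) : (Rfam s).f (Wit.entry s) ∈ Wit.Wcopy.H.verts :=
  have ⟨k, hk⟩ := Wit.hmeets s hs
  Nat.sInf_mem (s := {k | (Rfam s).f k ∈ Wit.Wcopy.H.verts}) ⟨k, (Wit.hbranch s hs k hk).1⟩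

theorem ray_notMem_of_lt_entry {k : ℕ} (hk : k < Wit.entry s) :
    (Rfam s).f k ∉ Wit.Wcopy.H.verts :=
  Nat.notMem_of_lt_sInf hk

/-- The ray enters `B(e')` through `S(e')`, where the witness puts it into the branch set of
`s`; as `W ⊆ B(e')`, this is also its first vertex in `W`. -/
theorem ray_entry_mem_copyBranch (hs : s ∈ D.sep e) (h₀ : (Rfam s).f 0 = s) :
    (Rfam s).f (Wit.entry s) ∈ Wit.copyBranch s := by
  have hW := Wit.hsub (ray_entry_mem hs)
  have h₀' : (Rfam s).f 0 ∈ D.sideA Wit.e' := by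
    rw [h₀]
    exact sideA_subset_sideA Wit.habove (sep_subset_sideA e hs)
  obtain ⟨hJW, hJφ⟩ := Wit.hbranch s hs _ (ray_sInf_mem_sep Wit.e' (Rfam s) h₀' hW)
  have hJ : Wit.entry s = sInf {k | (Rfam s).f k ∈ D.bough Wit.e'} :=
    le_antisymm (Nat.sInf_le hJW) (Nat.sInf_le hW)
  rw [hJ]
  exact ⟨hJW, hJφ⟩

theorem mem_segment_self (h₀ : (Rfam s).f 0 = s) : s ∈ Wit.segment s :=
  ⟨0, Nat.zero_le _, h₀⟩

theorem segment_subset_bough (hR : D.IsSepRayFamily e Rfam) (hs : s ∈ D.sep e) :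
    Wit.segment s ⊆ D.bough e := by
  rintro _ ⟨k, hk, rfl⟩
  exact ray_mem_bough_of_le e (Rfam s)
    (bough_subset_bough Wit.habove (Wit.hsub (ray_entry_mem hs)))
    (fun j _ => hR.notMem_sep hs j.succ_pos) hk

theorem pushOutMap_of_mem (hw : w ∈ Wit.Wcopy.H.verts) :
    Wit.pushOutMap w = Wit.Wcopy.φ w :=
  if_pos hw

theorem pushOutMap_of_mem_segment (hR : D.IsSepRayFamily e Rfam) (hs : s ∈ D.sep e)
    (hw : w ∈ Wit.segment s) : Wit.pushOutMap w = s := by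
  by_cases hwW : w ∈ Wit.Wcopy.H.verts
  · obtain ⟨k, hk, rfl⟩ := hw
    obtain rfl : k = Wit.entry s :=
      le_antisymm hk (not_lt.mp fun h => ray_notMem_of_lt_entry h hwW)
    exact (pushOutMap_of_mem hwW).trans (ray_entry_mem_copyBranch hs (hR.start s hs)).2
  · have h : ∃ s ∈ D.sep e, w ∈ Wit.segment s := ⟨s, hs, hw⟩
    rw [pushOutMap, if_neg hwW, dif_pos h]
    obtain ⟨hs', k', -, hk'⟩ := h.choose_spec
    obtain ⟨k, -, rfl⟩ := hw
    by_contra hne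
    exact Set.disjoint_left.mp (hR.disjoint _ hs' s hs hne) ⟨k', hk'⟩ ⟨k, rfl⟩

theorem pushOutMap_of_notMem_bough (hR : D.IsSepRayFamily e Rfam) (hv : v ∉ D.bough e) :
    Wit.pushOutMap v = v := by
  have hW : v ∉ Wit.Wcopy.H.verts := fun h => hv (bough_subset_bough Wit.habove (Wit.hsub h))
  have hseg : ¬∃ s ∈ D.sep e, v ∈ Wit.segment s :=
    fun ⟨s, hs, hvs⟩ => hv (segment_subset_bough hR hs hvs)
  rw [pushOutMap, if_neg hW, dif_neg hseg]

theorem pushOutMap_of_mem_sideA (hR : D.IsSepRayFamily e Rfam) (hv : v ∈ D.sideA e) :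
    Wit.pushOutMap v = v := by
  by_cases hb : v ∈ D.bough e
  · have hs := mem_sep_of_mem_sideA_of_mem_bough e hv hb
    exact pushOutMap_of_mem_segment hR hs (mem_segment_self (hR.start v hs))
  · exact pushOutMap_of_notMem_bough hR hb

theorem pushOutMap_cases (hR : D.IsSepRayFamily e Rfam) (hw : w ∈ Wit.pushOutSubgraph.verts) :
    (w ∈ Wit.Wcopy.H.verts ∧ Wit.pushOutMap w = Wit.Wcopy.φ w) ∨
      (∃ s ∈ D.sep e, w ∈ Wit.segment s ∧ Wit.pushOutMap w = s) ∨
      (w ∉ D.bough e ∧ Wit.pushOutMap w = w) := by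
  by_cases hwW : w ∈ Wit.Wcopy.H.verts
  · exact .inl ⟨hwW, pushOutMap_of_mem hwW⟩
  by_cases hseg : ∃ s ∈ D.sep e, w ∈ Wit.segment s
  · obtain ⟨s, hs, hws⟩ := hseg
    exact .inr (.inl ⟨s, hs, hws, pushOutMap_of_mem_segment hR hs hws⟩)
  have hA : w ∈ D.sideA e := by
    rcases hw with hA | hW | hS
    exacts [hA, absurd hW hwW, absurd hS hseg]
  refine .inr (.inr ⟨fun hb => hseg ?_, pushOutMap_of_mem_sideA hR hA⟩)
  have hs := mem_sep_of_mem_sideA_of_mem_bough e hA hb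
  exact ⟨w, hs, mem_segment_self (hR.start w hs)⟩

theorem pushOutBranch_of_notMem_bough (hR : D.IsSepRayFamily e Rfam) (hv : v ∉ D.bough e) :
    {w ∈ Wit.pushOutSubgraph.verts | Wit.pushOutMap w = v} = {v} := by
  ext w
  refine ⟨fun ⟨hw, hwv⟩ => ?_, fun hw => ?_⟩
  · rcases pushOutMap_cases hR hw with ⟨-, hφ⟩ | ⟨s, hs, -, hφ⟩ | ⟨-, hφ⟩
    · exact absurd (hwv ▸ hφ ▸ (Wit.Wcopy.φ w).2) hv
    · exact absurd (hwv ▸ hφ ▸ sep_subset_bough e hs) hv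
    · exact hφ.symm.trans hwv
  · rw [hw]
    exact ⟨.inl (mem_sideA_of_notMem_bough e hv), pushOutMap_of_notMem_bough hR hv⟩

theorem pushOutBranch_of_notMem_sep (hR : D.IsSepRayFamily e Rfam) (hv : v ∈ D.bough e)
    (hs : v ∉ D.sep e) :
    {w ∈ Wit.pushOutSubgraph.verts | Wit.pushOutMap w = v} = Wit.copyBranch v := by
  ext w
  refine ⟨fun ⟨hw, hwv⟩ => ?_, fun ⟨hw, hwv⟩ => ⟨.inr (.inl hw), pushOutMap_of_mem hw ▸ hwv⟩⟩
  rcases pushOutMap_cases hR hw with ⟨hW, hφ⟩ | ⟨s, hs', -, hφ⟩ | ⟨hb, hφ⟩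
  · exact ⟨hW, hφ ▸ hwv⟩
  · exact absurd (hwv ▸ hφ ▸ hs') hs
  · obtain rfl := hφ.symm.trans hwv
    exact absurd hv hb

theorem pushOutBranch_of_mem_sep (hR : D.IsSepRayFamily e Rfam) (hs : s ∈ D.sep e) :
    {w ∈ Wit.pushOutSubgraph.verts | Wit.pushOutMap w = s} =
      Wit.segment s ∪ Wit.copyBranch s := by
  ext w
  refine ⟨fun ⟨hw, hws⟩ => ?_, ?_⟩
  · rcases pushOutMap_cases hR hw with ⟨hW, hφ⟩ | ⟨s', -, hw', hφ⟩ | ⟨hb, hφ⟩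
    · exact .inr ⟨hW, hφ ▸ hws⟩
    · exact .inl (hws ▸ hφ ▸ hw')
    · obtain rfl := hφ.symm.trans hws
      exact absurd (sep_subset_bough e hs) hb
  · rintro (hw | ⟨hw, hws⟩)
    · exact ⟨.inr (.inr ⟨s, hs, hw⟩), pushOutMap_of_mem_segment hR hs hw⟩
    · exact ⟨.inr (.inl hw), pushOutMap_of_mem hw ▸ hws⟩

theorem pushOutMap_eq_of_rayEdge (hR : D.IsSepRayFamily e Rfam) (h : Wit.RayEdge a b) :
    Wit.pushOutMap a = Wit.pushOutMap b := by
  obtain ⟨s, hs, k, hk, rfl, rfl⟩ := h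
  rw [pushOutMap_of_mem_segment hR hs ⟨k, hk.le, rfl⟩,
    pushOutMap_of_mem_segment hR hs ⟨k + 1, hk, rfl⟩]

theorem pushOutSubgraph_adj_cases (hR : D.IsSepRayFamily e Rfam)
    (h : Wit.pushOutSubgraph.Adj a b) (hne : Wit.pushOutMap a ≠ Wit.pushOutMap b) :
    (a ∈ D.sideA e ∧ b ∈ D.sideA e ∧ G.Adj a b) ∨ Wit.Wcopy.H.Adj a b := by
  rcases h with h | h | h | h
  · exact .inl h
  · exact .inr h
  · exact absurd (pushOutMap_eq_of_rayEdge hR h) hne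
  · exact absurd (pushOutMap_eq_of_rayEdge hR h).symm hne

theorem pushOut_adj_of_adj (hR : D.IsSepRayFamily e Rfam) ⦃a b : V⦄
    (h : Wit.pushOutSubgraph.Adj a b) (hne : Wit.pushOutMap a ≠ Wit.pushOutMap b) :
    G.Adj (Wit.pushOutMap a) (Wit.pushOutMap b) := by
  rcases pushOutSubgraph_adj_cases hR h hne with ⟨ha, hb, hab⟩ | hab
  · rwa [pushOutMap_of_mem_sideA hR ha, pushOutMap_of_mem_sideA hR hb]
  · rw [pushOutMap_of_mem (Wit.Wcopy.H.edge_vert hab),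
      pushOutMap_of_mem (Wit.Wcopy.H.edge_vert hab.symm)] at hne ⊢
    exact (Wit.Wcopy.adj_of_edge hab fun h => hne (congrArg Subtype.val h)).1

theorem exists_pushOut_adj (hR : D.IsSepRayFamily e Rfam) ⦃v w : V⦄ (h : G.Adj v w) :
    ∃ a b, Wit.pushOutSubgraph.Adj a b ∧ Wit.pushOutMap a = v ∧ Wit.pushOutMap b = w := by
  rcases sideA_or_barB_of_adj e h with ⟨hv, hw⟩ | ⟨hv, hw, hbar⟩
  · exact ⟨v, w, .inl ⟨hv, hw, h⟩, pushOutMap_of_mem_sideA hR hv,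
      pushOutMap_of_mem_sideA hR hw⟩
  · obtain ⟨a, b, hab, ha, hb⟩ := Wit.Wcopy.edge_of_adj hbar
    refine ⟨a, b, .inr (.inl hab), ?_, ?_⟩
    · rw [pushOutMap_of_mem (Wit.Wcopy.H.edge_vert hab), ha]
    · rw [pushOutMap_of_mem (Wit.Wcopy.H.edge_vert hab.symm), hb]

theorem eq_of_pushOut_adj_of_mem_sideA (hR : D.IsSepRayFamily e Rfam) (hvw : v ≠ w)
    (hv : v ∈ D.sideA e) (hw : w ∈ D.sideA e) (hab : Wit.pushOutSubgraph.Adj a b)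
    (ha : Wit.pushOutMap a = v) (hb : Wit.pushOutMap b = w) : a = v ∧ b = w := by
  subst ha hb
  rcases pushOutSubgraph_adj_cases hR hab hvw with ⟨ha, hb, -⟩ | hab
  · exact ⟨(pushOutMap_of_mem_sideA hR ha).symm, (pushOutMap_of_mem_sideA hR hb).symm⟩
  · simp only [pushOutMap_of_mem (Wit.Wcopy.H.edge_vert hab),
      pushOutMap_of_mem (Wit.Wcopy.H.edge_vert hab.symm)] at hv hw hvw
    exact absurd ⟨mem_sep_of_mem_sideA_of_mem_bough e hv (Wit.Wcopy.φ a).2,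
      mem_sep_of_mem_sideA_of_mem_bough e hw (Wit.Wcopy.φ b).2⟩
      (Wit.Wcopy.adj_of_edge hab fun h => hvw (congrArg Subtype.val h)).2

theorem Wcopy_adj_of_pushOut_adj_of_barB (hR : D.IsSepRayFamily e Rfam) (hv : v ∈ D.bough e)
    (hw : w ∈ D.bough e) (hbar : (D.barB e).Adj ⟨v, hv⟩ ⟨w, hw⟩)
    (hab : Wit.pushOutSubgraph.Adj a b) (ha : Wit.pushOutMap a = v)
    (hb : Wit.pushOutMap b = w) :
    Wit.Wcopy.H.Adj a b ∧ Wit.Wcopy.φ a = ⟨v, hv⟩ ∧ Wit.Wcopy.φ b = ⟨w, hw⟩ := by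
  rcases pushOutSubgraph_adj_cases hR hab (ha ▸ hb ▸ hbar.1.ne) with ⟨ha', hb', -⟩ | hab
  · rw [pushOutMap_of_mem_sideA hR ha'] at ha
    rw [pushOutMap_of_mem_sideA hR hb'] at hb
    exact absurd ⟨mem_sep_of_mem_sideA_of_mem_bough e (ha ▸ ha') hv,
      mem_sep_of_mem_sideA_of_mem_bough e (hb ▸ hb') hw⟩ hbar.2
  · rw [pushOutMap_of_mem (Wit.Wcopy.H.edge_vert hab)] at ha
    rw [pushOutMap_of_mem (Wit.Wcopy.H.edge_vert hab.symm)] at hb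
    exact ⟨hab, Subtype.ext ha, Subtype.ext hb⟩

theorem pushOut_edge_unique (hR : D.IsSepRayFamily e Rfam) ⦃v w : V⦄ (h : G.Adj v w)
    (a b a' b' : V) (hab : Wit.pushOutSubgraph.Adj a b) (hab' : Wit.pushOutSubgraph.Adj a' b')
    (ha : Wit.pushOutMap a = v) (hb : Wit.pushOutMap b = w) (ha' : Wit.pushOutMap a' = v)
    (hb' : Wit.pushOutMap b' = w) : a = a' ∧ b = b' := by
  rcases sideA_or_barB_of_adj e h with ⟨hv, hw⟩ | ⟨hv, hw, hbar⟩
  · obtain ⟨rfl, rfl⟩ := eq_of_pushOut_adj_of_mem_sideA hR h.ne hv hw hab ha hb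
    obtain ⟨rfl, rfl⟩ := eq_of_pushOut_adj_of_mem_sideA hR h.ne hv hw hab' ha' hb'
    exact ⟨rfl, rfl⟩
  · obtain ⟨h₁, h₂, h₃⟩ := Wcopy_adj_of_pushOut_adj_of_barB hR hv hw hbar hab ha hb
    obtain ⟨h₁', h₂', h₃'⟩ := Wcopy_adj_of_pushOut_adj_of_barB hR hv hw hbar hab' ha' hb'
    exact Wit.Wcopy.edge_unique hbar a b a' b' h₁ h₁' h₂ h₃ h₂' h₃'

theorem segment_connected (hs : s ∈ D.sep e) :
    (Wit.pushOutSubgraph.induce (Wit.segment s)).Connected :=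
  Subgraph.induce_image_Iic_connected _ _ fun k hk =>
    .inr (.inr (.inl ⟨s, hs, k, hk, rfl, rfl⟩))

theorem copyBranch_connected (v : D.bough e) :
    (Wit.pushOutSubgraph.induce (Wit.copyBranch v)).Connected := by
  have hle : Wit.Wcopy.H ≤ Wit.pushOutSubgraph :=
    ⟨fun _ hw => .inr (.inl hw), fun _ _ h => .inr (.inl h)⟩
  have h := Wit.Wcopy.branch_connected v
  simp only [Subtype.ext_iff] at h
  exact h.mono (Subgraph.induce_mono_left hle) rfl

theorem pushOutBranch_connected (hR : D.IsSepRayFamily e Rfam) (v : V) :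
    (Wit.pushOutSubgraph.induce
      {w ∈ Wit.pushOutSubgraph.verts | Wit.pushOutMap w = v}).Connected := by
  by_cases hv : v ∈ D.bough e
  · by_cases hs : v ∈ D.sep e
    · rw [pushOutBranch_of_mem_sep hR hs]
      exact Subgraph.induce_union_connected (segment_connected hs).preconnected
        (copyBranch_connected ⟨v, hv⟩).preconnected
        ⟨_, Set.mem_image_of_mem _ Set.self_mem_Iic,
          ray_entry_mem_copyBranch hs (hR.start v hs)⟩
    · rw [pushOutBranch_of_notMem_sep hR hv hs]
      exact copyBranch_connected ⟨v, hv⟩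
  · rw [pushOutBranch_of_notMem_bough hR hv]
    exact Subgraph.induce_singleton_connected _ _

variable (Wit) in
noncomputable def pushOut (hR : D.IsSepRayFamily e Rfam) : InflatedCopy G G where
  H := Wit.pushOutSubgraph
  φ := Wit.pushOutMap
  branch_nonempty v := (pushOutBranch_connected hR v).nonempty
  branch_connected := pushOutBranch_connected hR
  adj_of_edge := pushOut_adj_of_adj hR
  edge_of_adj := exists_pushOut_adj hR
  edge_unique := pushOut_edge_unique hR

end SelfSimilarityWitness

theorem pushout_of_selfSimilarity_witness_general
    (G : SimpleGraph V)
    (D : RootedTreeDecomp G T)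
    (e : D.Edge) (ω : Set (Ray G))
    (Rfam : V → Ray G)
    (hstart : ∀ s ∈ D.sep e, (Rfam s).f 0 = s ∧ Rfam s ∈ ω)
    (hdisj : ∀ s ∈ D.sep e, ∀ s' ∈ D.sep e, s ≠ s' →
      Disjoint (Rfam s).verts (Rfam s').verts)
    (n : ℕ) (Wit : SelfSimilarityWitness D e Rfam n) :
    ∃ G' : InflatedCopy G G,
      (∀ v : V, v ∉ D.bough e → G'.branch v = {v}) ∧
      (∀ v : V, v ∈ D.bough e → v ∉ D.sep e →
        G'.branch v = {w : V | w ∈ Wit.Wcopy.H.verts ∧ (↑(Wit.Wcopy.φ w) : V) = v}) ∧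
      ∀ s ∈ D.sep e, ∃ K : ℕ, (Rfam s).f K ∈ Wit.Wcopy.H.verts ∧
        (∀ k < K, (Rfam s).f k ∉ Wit.Wcopy.H.verts) ∧
        G'.branch s = {w : V | ∃ k ≤ K, (Rfam s).f k = w} ∪
          {w : V | w ∈ Wit.Wcopy.H.verts ∧ (↑(Wit.Wcopy.φ w) : V) = s} := by
  have hR : D.IsSepRayFamily e Rfam := ⟨fun s hs => (hstart s hs).1, hdisj⟩
  exact ⟨Wit.pushOut hR, fun v hv => Wit.pushOutBranch_of_notMem_bough hR hv,
    fun v hv hs => Wit.pushOutBranch_of_notMem_sep hR hv hs,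
    fun s hs => ⟨Wit.entry s, Wit.ray_entry_mem hs, fun k hk => Wit.ray_notMem_of_lt_entry hk,
      Wit.pushOutBranch_of_mem_sep hR hs⟩⟩

/-- For each edge `e`, each `n`, and each witness `Wit` of the
self-similarity of the bough `B(e)` of distance at least `n`, the amalgam
`G[A(e)] ⊕_{R_e} W` is a well-defined inflated copy of `G` inside `G` (a push-out
of `G` along `e` to depth `n`): its branch sets are `{v}` for `v ∉ B(e)`, the
`W`-branch set for `v ∈ B(e) ∖ S(e)`, and, for `s ∈ S(e)`, the initial segment of
`R_{e,s}` up to its first vertex in `W` together with the `W`-branch set of `s`. -/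
theorem pushout_of_selfSimilarity_witness
    (G : SimpleGraph V) (hlf : LocFin G) (hconn : G.Connected)
    (D : RootedTreeDecomp G T) (hD : Extensive D)
    (e : D.Edge) (ω : Set (Ray G)) (hω : IsEnd G ω)
    (Rfam : V → Ray G)
    (hstart : ∀ s ∈ D.sep e, (Rfam s).f 0 = s ∧ Rfam s ∈ ω)
    (hdisj : ∀ s ∈ D.sep e, ∀ s' ∈ D.sep e, s ≠ s' →
      Disjoint (Rfam s).verts (Rfam s').verts)
    (n : ℕ) (Wit : SelfSimilarityWitness D e Rfam n) :
    ∃ G' : InflatedCopy G G,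
      (∀ v : V, v ∉ D.bough e → G'.branch v = {v}) ∧
      (∀ v : V, v ∈ D.bough e → v ∉ D.sep e →
        G'.branch v = {w : V | w ∈ Wit.Wcopy.H.verts ∧ (↑(Wit.Wcopy.φ w) : V) = v}) ∧
      ∀ s ∈ D.sep e, ∃ K : ℕ, (Rfam s).f K ∈ Wit.Wcopy.H.verts ∧
        (∀ k < K, (Rfam s).f k ∉ Wit.Wcopy.H.verts) ∧
        G'.branch s = {w : V | ∃ k ≤ K, (Rfam s).f k = w} ∪
          {w : V | w ∈ Wit.Wcopy.H.verts ∧ (↑(Wit.Wcopy.φ w) : V) = s} :=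
  pushout_of_selfSimilarity_witness_general G D e ω Rfam hstart hdisj n Wit

end Ubiquity
end

section
/- Let Γ be a graph, ε an end of Γ, and R = (R_i : i ∈ I) a finite family of disjoint ε-rays, and let i₁, i₂, j ∈ I be distinct. Then i₁ and i₂ belong to different components of RG(R) − j if and only if R_j separates R_{i₁} from R_{i₂}. -/
set_option autoImplicit false

/-!
A walk from `i₁` to `i₂` in `RG(R) − j` yields, edge by edge, rays equivalent in `Γ − V(R j)`,
and this equivalence is transitive along rays avoiding `V(R j)`. Conversely, take infinitely many
disjoint paths avoiding `R j` between tails of `R i₁` and `R i₂`, and let `C` be the component of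
`i₁` in `RG(R) − j`. Each path contains a segment from a ray indexed in `C` to a ray indexed
outside `C ∪ {j}` that meets no other ray; by pigeonhole infinitely many of these segments join
the same two rays, which gives an edge of `RG(R) − j` leaving `C`.
-/

namespace SimpleGraph.Walk

variable {V : Type*} {G : SimpleGraph V} {A B : Set V}

/-- Scan the walk, restarting the accumulated prefix `p` at each visit to `A`; stop at the
first visit to `B`. -/
theorem exists_crossing_subwalk_of_prefix {x u v : V} (p : G.Walk x u) (hx : x ∈ A)
    (hp : ∀ z ∈ p.support, z ≠ x → z ≠ u → z ∉ A ∪ B) (w : G.Walk u v) (hv : v ∈ B) :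
    ∃ a b, ∃ s : G.Walk a b, a ∈ A ∧ b ∈ B ∧ s.support ⊆ p.support ++ w.support ∧
      ∀ z ∈ s.support, z ≠ a → z ≠ b → z ∉ A ∪ B := by
  induction w generalizing x with
  | nil => exact ⟨x, _, p, hx, hv, List.subset_append_left _ _, hp⟩
  | @cons u u' v h q ih =>
    by_cases huB : u ∈ B
    · exact ⟨x, u, p, hx, huB, List.subset_append_left _ _, hp⟩
    by_cases huA : u ∈ A
    · obtain ⟨a, b, s, ha, hb, hs, hint⟩ :=
        ih (cons h nil) huA (by simp +contextual) hv
      refine ⟨a, b, s, ha, hb, List.Subset.trans hs ?_, hint⟩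
      simp +contextual [List.subset_def]
    · have hp' : ∀ z ∈ (p.concat h).support, z ≠ x → z ≠ u' → z ∉ A ∪ B := by
        intro z hz hzx hzu'
        rw [support_concat, List.mem_append, List.mem_singleton] at hz
        rcases hz with hz | rfl
        · by_cases hzu : z = u
          · subst hzu; simp [huA, huB]
          · exact hp z hz hzx hzu
        · exact absurd rfl hzu'
      obtain ⟨a, b, s, ha, hb, hs, hint⟩ := ih (p.concat h) hx hp' hv
      refine ⟨a, b, s, ha, hb, List.Subset.trans hs ?_, hint⟩
      simp +contextual [List.subset_def, or_imp]

theorem exists_crossing_subwalk {u v : V} (w : G.Walk u v) (hu : u ∈ A) (hv : v ∈ B) :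
    ∃ a b, ∃ s : G.Walk a b, a ∈ A ∧ b ∈ B ∧ s.support ⊆ w.support ∧
      ∀ z ∈ s.support, z ≠ a → z ≠ b → z ∉ A ∪ B := by
  obtain ⟨a, b, s, ha, hb, hs, hint⟩ :=
    exists_crossing_subwalk_of_prefix (nil : G.Walk u u) hu (by simp +contextual) w hv
  refine ⟨a, b, s, ha, hb, List.Subset.trans hs ?_, hint⟩
  simp +contextual [List.subset_def]

end SimpleGraph.Walk

open Function in
theorem exists_seq_pairwise_disjoint {α β : Type*} {p : α → Prop} (S : α → Set β)
    (hS : ∀ a, (S a).Finite) (h : ∀ F : Set β, F.Finite → ∃ a, p a ∧ Disjoint (S a) F) :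
    ∃ f : ℕ → α, (∀ n, p (f n)) ∧ Pairwise (Disjoint on fun n => S (f n)) := by
  classical
  choose g hgp hgS using fun F : Finset β => h F F.finite_toSet
  -- `acc n` collects the footprints of the first `n` chosen elements, which the next one avoids.
  let acc : ℕ → Finset β := fun n => Nat.rec ∅ (fun _ F => F ∪ (hS (g F)).toFinset) n
  have hmono : Monotone acc := monotone_nat_of_le_succ fun n => Finset.subset_union_left
  refine ⟨fun n => g (acc n), fun n => hgp _, pairwise_disjoint_on _ |>.mpr fun m n hmn => ?_⟩
  have hsub : ∀ z ∈ S (g (acc m)), z ∈ acc n := fun z hz =>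
    hmono hmn (Finset.mem_union_right (acc m) ((hS _).mem_toFinset.mpr hz))
  exact Set.disjoint_left.mpr fun z hzm hzn =>
    Set.disjoint_left.mp (hgS (acc n)) hzn (Finset.mem_coe.mpr (hsub z hzm))

namespace Ubiquity

open SimpleGraph

variable {W : Type}

section

variable {Γ : SimpleGraph W}

theorem ReachAvoid.refl {α : Type} {K : SimpleGraph α} {X : Set α} {a : α} (ha : a ∉ X) :
    ReachAvoid K X a a :=
  ⟨Walk.nil, by simpa using ha⟩

theorem ReachAvoid.concat {α : Type} {K : SimpleGraph α} {X : Set α} {a b c : α}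
    (hab : ReachAvoid K X a b) (hbc : K.Adj b c) (hc : c ∉ X) : ReachAvoid K X a c := by
  obtain ⟨w, hw⟩ := hab
  refine ⟨w.concat hbc, fun z hz => ?_⟩
  rw [Walk.support_concat, List.mem_append, List.mem_singleton] at hz
  rcases hz with hz | rfl
  exacts [hw z hz, hc]

theorem Ray.isTailOf_refl (R : Ray Γ) : R.IsTailOf R := ⟨0, fun _ => rfl⟩

theorem Ray.IsTailOf.verts_subset {R' R : Ray Γ} (h : R'.IsTailOf R) : R'.verts ⊆ R.verts := by
  obtain ⟨k, hk⟩ := h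
  rintro v ⟨m, rfl⟩
  exact ⟨m + k, (hk m).symm⟩

theorem Ray.exists_walk (R : Ray Γ) (a b : ℕ) :
    ∃ w : Γ.Walk (R.f a) (R.f b), ∀ z ∈ w.support, ∃ t, min a b ≤ t ∧ R.f t = z := by
  wlog hab : a ≤ b generalizing a b
  · obtain ⟨w, hw⟩ := this b a (le_of_not_ge hab)
    refine ⟨w.reverse, fun z hz => ?_⟩
    rw [min_comm]
    exact hw z (by simpa using hz)
  rw [min_eq_left hab]
  induction b, hab using Nat.le_induction with
  | base => exact ⟨Walk.nil, fun z hz => ⟨a, le_rfl, ((Walk.mem_support_nil_iff).mp hz).symm⟩⟩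
  | succ b hab ih =>
    obtain ⟨w, hw⟩ := ih
    refine ⟨w.concat (R.adj b), fun z hz => ?_⟩
    rw [Walk.support_concat, List.mem_append, List.mem_singleton] at hz
    rcases hz with hz | rfl
    exacts [hw z hz, ⟨b + 1, by omega, rfl⟩]

namespace PathBetween

variable {A B : Set W}

open Classical in
noncomputable def ofWalk {u v : W} (w : Γ.Walk u v) (hu : u ∈ A) (hv : v ∈ B) :
    PathBetween Γ A B :=
  ⟨u, v, w.bypass, w.bypass_isPath, hu, hv⟩

open Classical in
theorem verts_ofWalk_subset {u v : W} (w : Γ.Walk u v) (hu : u ∈ A) (hv : v ∈ B) :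
    (ofWalk w hu hv).verts ⊆ {z | z ∈ w.support} :=
  fun _ hz => w.support_bypass_subset_support hz

theorem verts_finite (P : PathBetween Γ A B) : P.verts.Finite :=
  P.walk.support.finite_toSet

def reverse (P : PathBetween Γ A B) : PathBetween Γ B A :=
  ⟨P.last, P.first, P.walk.reverse, P.isPath.reverse, P.last_mem, P.first_mem⟩

@[simp]
theorem verts_reverse (P : PathBetween Γ A B) : P.reverse.verts = P.verts := by
  ext v
  simp [verts, reverse]

def mono {A' B' : Set W} (P : PathBetween Γ A B) (hA : A ⊆ A') (hB : B ⊆ B') :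
    PathBetween Γ A' B' :=
  ⟨P.first, P.last, P.walk, P.isPath, hA P.first_mem, hB P.last_mem⟩

@[simp]
theorem verts_mono {A' B' : Set W} (P : PathBetween Γ A B) (hA : A ⊆ A') (hB : B ⊆ B') :
    (P.mono hA hB).verts = P.verts :=
  rfl

end PathBetween

section RayEquivAvoiding

variable {X : Set W} {R S T : Ray Γ}

theorem RayEquivAvoiding.exists_path (h : RayEquivAvoiding Γ X R S) {F : Set W}
    (hF : F.Finite) : ∃ P : PathBetween Γ R.verts S.verts, Disjoint P.verts (X ∪ F) := by
  obtain ⟨P, hPX, hPd⟩ := h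
  by_contra! hmeet
  have hF' : ∀ m, ∃ v ∈ F, v ∈ (P m).verts := fun m => by
    obtain ⟨v, hvP, hv⟩ := Set.not_disjoint_iff.mp (hmeet (P m))
    exact ⟨v, hv.resolve_left (hPX m v hvP), hvP⟩
  choose v hvF hvP using hF'
  have : Finite F := hF.to_subtype
  refine not_injective_infinite_finite (fun m => (⟨v m, hvF m⟩ : F)) fun m n hmn => ?_
  by_contra hne
  have hv : v m = v n := congrArg Subtype.val hmn
  exact Set.disjoint_left.mp (hPd m n hne) (hvP m) (hv ▸ hvP n)

theorem rayEquivAvoiding_of_forall_finite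
    (h : ∀ F : Set W, F.Finite →
      ∃ P : PathBetween Γ R.verts S.verts, Disjoint P.verts (X ∪ F)) :
    RayEquivAvoiding Γ X R S := by
  obtain ⟨P, hPX, hPd⟩ := exists_seq_pairwise_disjoint (p := fun P => Disjoint P.verts X)
    PathBetween.verts PathBetween.verts_finite fun F hF =>
      (h F hF).imp fun P hP => ⟨hP.mono_right Set.subset_union_left,
        hP.mono_right Set.subset_union_right⟩
  exact ⟨P, fun n _ hv hvX => Set.disjoint_left.mp (hPX n) hv hvX, hPd⟩

theorem RayEquivAvoiding.symm (h : RayEquivAvoiding Γ X R S) : RayEquivAvoiding Γ X S R := by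
  obtain ⟨P, hPX, hPd⟩ := h
  exact ⟨fun n => (P n).reverse, by simpa using hPX, by simpa using hPd⟩

theorem RayEquivAvoiding.refl (hR : Disjoint R.verts X) : RayEquivAvoiding Γ X R R := by
  refine ⟨fun n => ⟨R.f n, R.f n, Walk.nil, Walk.IsPath.nil, ⟨n, rfl⟩, ⟨n, rfl⟩⟩, ?_, ?_⟩
  · rintro n v hv
    obtain rfl : v = R.f n := by simpa [PathBetween.verts] using hv
    exact Set.disjoint_left.mp hR ⟨n, rfl⟩
  · intro m n hmn
    simpa [PathBetween.verts] using R.inj.ne hmn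

/-- Both paths are chosen to avoid an initial segment of `S` containing all of `S ∩ F`, so
they can be joined along the remaining tail of `S`. -/
theorem RayEquivAvoiding.trans (hRS : RayEquivAvoiding Γ X R S)
    (hST : RayEquivAvoiding Γ X S T) (hS : Disjoint S.verts X) :
    RayEquivAvoiding Γ X R T := by
  refine rayEquivAvoiding_of_forall_finite fun F hF => ?_
  obtain ⟨K, hK⟩ := (hF.preimage S.inj.injOn).bddAbove
  have hF' : (F ∪ S.f '' Set.Iic K).Finite := hF.union ((Set.finite_Iic K).image _)
  obtain ⟨P, hP⟩ := hRS.exists_path hF'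
  obtain ⟨Q, hQ⟩ := hST.exists_path hF'
  obtain ⟨k₁, hk₁⟩ := P.last_mem
  obtain ⟨k₂, hk₂⟩ := Q.first_mem
  have hbeyond : ∀ k, S.f k ∉ S.f '' Set.Iic K → K < k := fun k hk =>
    not_le.mp fun hkK => hk ⟨k, hkK, rfl⟩
  have hk₁K := hbeyond k₁ fun h => Set.disjoint_left.mp hP (hk₁ ▸ P.walk.end_mem_support)
    (Or.inr (Or.inr h))
  have hk₂K := hbeyond k₂ fun h => Set.disjoint_left.mp hQ (hk₂ ▸ Q.walk.start_mem_support)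
    (Or.inr (Or.inr h))
  obtain ⟨w, hw⟩ := S.exists_walk k₁ k₂
  let joined := (P.walk.copy rfl hk₁.symm).append (w.append (Q.walk.copy hk₂.symm rfl))
  refine ⟨PathBetween.ofWalk joined P.first_mem Q.last_mem,
    Set.disjoint_left.mpr fun z hz hzXF => ?_⟩
  have hz' := PathBetween.verts_ofWalk_subset _ _ _ hz
  simp only [joined, Set.mem_ofPred_eq, Walk.mem_support_append_iff, Walk.support_copy] at hz'
  rcases hz' with hzP | hzw | hzQ
  · exact Set.disjoint_left.mp hP hzP (Or.imp_right Or.inl hzXF)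
  · obtain ⟨t, ht, rfl⟩ := hw z hzw
    rcases hzXF with hzX | hzF
    · exact Set.disjoint_left.mp hS ⟨t, rfl⟩ hzX
    · have := hK hzF
      omega
  · exact Set.disjoint_left.mp hQ hzQ (Or.imp_right Or.inl hzXF)

end RayEquivAvoiding

theorem LinkedRays.rayEquivAvoiding {I : Type} {R : I → Ray Γ} {a b j : I}
    (h : LinkedRays Γ R a b) (hja : j ≠ a) (hjb : j ≠ b) :
    RayEquivAvoiding Γ (R j).verts (R a) (R b) := by
  obtain ⟨P, hPd, hPR⟩ := h
  exact ⟨P, fun n _ hv hvj => Set.disjoint_left.mp (hPR n j hja hjb) hv hvj, hPd⟩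

theorem rayEquivAvoiding_of_reachAvoid {I : Type} {R : I → Ray Γ}
    (hR : ∀ i j, i ≠ j → Disjoint (R i).verts (R j).verts) {j a b : I}
    (h : ReachAvoid (rayGraph Γ R) {j} a b) : RayEquivAvoiding Γ (R j).verts (R a) (R b) := by
  obtain ⟨w, hw⟩ := h
  induction w with
  | nil => exact .refl (hR _ _ (by simpa using hw))
  | @cons u v _ huv q ih =>
    have huj : u ≠ j := by simpa using hw u (by simp)
    have hvj : v ≠ j := by simpa using hw v (by simp)
    have hlink : RayEquivAvoiding Γ (R j).verts (R u) (R v) := by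
      rcases huv.2 with hl | hl
      exacts [hl.rayEquivAvoiding huj.symm hvj.symm, (hl.rayEquivAvoiding hvj.symm huj.symm).symm]
    exact hlink.trans (ih fun z hz => hw z (by simp [hz])) (hR _ _ hvj)

section Linking

variable {I : Type} {R : I → Ray Γ}

theorem PathBetween.exists_linking_subpath
    (hR : ∀ i j, i ≠ j → Disjoint (R i).verts (R j).verts) {C D : Set I}
    (P : PathBetween Γ (⋃ a ∈ C, (R a).verts) (⋃ b ∈ D, (R b).verts))
    (hP : ∀ k, k ∉ C → k ∉ D → Disjoint P.verts (R k).verts) :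
    ∃ a ∈ C, ∃ b ∈ D, ∃ Q : PathBetween Γ (R a).verts (R b).verts,
      Q.verts ⊆ P.verts ∧ ∀ k, k ≠ a → k ≠ b → Disjoint Q.verts (R k).verts := by
  obtain ⟨x, y, s, hx, hy, hsP, hint⟩ :=
    P.walk.exists_crossing_subwalk P.first_mem P.last_mem
  obtain ⟨a, ha, hxa⟩ := Set.mem_iUnion₂.mp hx
  obtain ⟨b, hb, hyb⟩ := Set.mem_iUnion₂.mp hy
  have hQs := PathBetween.verts_ofWalk_subset s hxa hyb
  refine ⟨a, ha, b, hb, .ofWalk s hxa hyb, fun z hz => hsP (hQs hz),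
    fun k hka hkb => Set.disjoint_left.mpr fun z hzQ hzk => ?_⟩
  have hz : z ∈ s.support := hQs hzQ
  by_cases hzx : z = x
  · exact Set.disjoint_left.mp (hR a k hka.symm) hxa (hzx ▸ hzk)
  by_cases hzy : z = y
  · exact Set.disjoint_left.mp (hR b k hkb.symm) hyb (hzy ▸ hzk)
  have hzAB := hint z hz hzx hzy
  by_cases hkC : k ∈ C
  · exact hzAB (Or.inl (Set.mem_biUnion hkC hzk))
  by_cases hkD : k ∈ D
  · exact hzAB (Or.inr (Set.mem_biUnion hkD hzk))
  exact Set.disjoint_left.mp (hP k hkC hkD) (hsP hz) hzk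

theorem exists_linkedRays_of_paths [Finite I]
    (hR : ∀ i j, i ≠ j → Disjoint (R i).verts (R j).verts) {C D : Set I}
    (P : ℕ → PathBetween Γ (⋃ a ∈ C, (R a).verts) (⋃ b ∈ D, (R b).verts))
    (hPd : ∀ m n, m ≠ n → Disjoint (P m).verts (P n).verts)
    (hPR : ∀ m k, k ∉ C → k ∉ D → Disjoint (P m).verts (R k).verts) :
    ∃ a ∈ C, ∃ b ∈ D, LinkedRays Γ R a b := by
  choose a ha b hb Q hQP hQR using fun m => (P m).exists_linking_subpath hR (hPR m)
  obtain ⟨⟨a₀, b₀⟩, hfib⟩ := Finite.exists_infinite_fiber fun m => (a m, b m)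
  let e := Infinite.natEmbedding ((fun m => (a m, b m)) ⁻¹' {(a₀, b₀)})
  have hab : ∀ t, a (e t) = a₀ ∧ b (e t) = b₀ := fun t => Prod.mk.inj (e t).2
  have he : ∀ t t', t ≠ t' → (e t : ℕ) ≠ e t' := fun t t' htt' h =>
    htt' (e.injective (Subtype.ext h))
  refine ⟨a₀, (hab 0).1 ▸ ha _, b₀, (hab 0).2 ▸ hb _,
    fun t => (Q (e t)).mono (by rw [(hab t).1]) (by rw [(hab t).2]), fun t t' htt' => ?_,
    fun t k hka hkb => ?_⟩
  · simpa using (hPd _ _ (he t t' htt')).mono (hQP _) (hQP _)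
  · simpa using hQR (e t) k (by rwa [(hab t).1]) (by rwa [(hab t).2])

end Linking

end

theorem rayGraph_components_iff_separates_general
    (Γ : SimpleGraph W) (ε : Set (Ray Γ))
    {n : ℕ} (R : Fin n → Ray Γ) (hR : DisjointRayFamily Γ ε R)
    (i₁ i₂ j : Fin n) (h1j : i₁ ≠ j) (h2j : i₂ ≠ j) :
    ¬ ReachAvoid (rayGraph Γ R) {j} i₁ i₂ ↔ SeparatesRay Γ (R j) (R i₁) (R i₂) := by
  refine ⟨fun hnr R₁ R₂ hR₁ hR₂ _ _ ⟨P, hPj, hPd⟩ => ?_, fun hsep hreach => ?_⟩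
  · let C := {a | ReachAvoid (rayGraph Γ R) {j} i₁ a}
    let D := {b | b ∉ C ∧ b ≠ j}
    have h₁ : R₁.verts ⊆ ⋃ a ∈ C, (R a).verts := hR₁.verts_subset.trans
      (Set.subset_biUnion_of_mem (u := fun a => (R a).verts) (.refl (by simpa using h1j)))
    have h₂ : R₂.verts ⊆ ⋃ b ∈ D, (R b).verts := hR₂.verts_subset.trans
      (Set.subset_biUnion_of_mem (u := fun b => (R b).verts) ⟨hnr, h2j⟩)
    have hPR : ∀ m k, k ∉ C → k ∉ D → Disjoint (P m).verts (R k).verts := by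
      intro m k hkC hkD
      obtain rfl : k = j := not_not.mp (not_and.mp hkD hkC)
      exact Set.disjoint_left.mpr (hPj m)
    obtain ⟨a, ha, b, ⟨hbC, hbj⟩, hab⟩ :=
      exists_linkedRays_of_paths hR.2 (fun m => (P m).mono h₁ h₂) hPd hPR
    exact hbC (ha.concat ⟨fun h => hbC (h ▸ ha), .inl hab⟩ (by simpa using hbj))
  · exact hsep _ _ (R i₁).isTailOf_refl (R i₂).isTailOf_refl (hR.2 _ _ h1j) (hR.2 _ _ h2j)
      (rayEquivAvoiding_of_reachAvoid hR.2 hreach)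

/-- `i₁` and `i₂` lie in different components of `RG(R) − j` iff
`R j` separates `R i₁` from `R i₂`. -/
theorem rayGraph_components_iff_separates
    (Γ : SimpleGraph W) (ε : Set (Ray Γ)) (hε : IsEnd Γ ε)
    {n : ℕ} (R : Fin n → Ray Γ) (hR : DisjointRayFamily Γ ε R)
    (i₁ i₂ j : Fin n) (h12 : i₁ ≠ i₂) (h1j : i₁ ≠ j) (h2j : i₂ ≠ j) :
    ¬ ReachAvoid (rayGraph Γ R) {j} i₁ i₂ ↔ SeparatesRay Γ (R j) (R i₁) (R i₂) :=
  rayGraph_components_iff_separates_general Γ ε R hR i₁ i₂ j h1j h2j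

end Ubiquity
end
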